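/- arXiv:1905.10074 — 3 statements merged into one kernel-verified Lean document; each statement's English description precedes it below -/
import Mathlib

section
/- Let f : F_2^n → F_2^n be a Simon function with period s and let w_{y,z} = (1/2^n) · Σ_{x ∈ f^{-1}(z)} (-1)^{⟨x,y⟩}. Then for every y orthogonal to s (⟨y,s⟩ = 0), Σ_{z ∈ F_2^n} w_{y,z}^2 = 1/2^{n-1}. -/
theorem simon_uniform_probability (n : ℕ)
    (f : (Fin n → ZMod 2) → (Fin n → ZMod 2)) (s : Fin n → ZMod 2)
    (hs : s ≠ 0)
    (hf : ∀ x y, f x = f y ↔ (y = x ∨ y = x + s))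
    (y : Fin n → ZMod 2) (hy : (∑ i, y i * s i : ZMod 2) = 0) :
    ∑ z : Fin n → ZMod 2,
      (((1 : ℝ) / 2 ^ n) *
        ∑ x ∈ Finset.univ.filter (fun x => f x = z),
          (-1 : ℝ) ^ (∑ i, x i * y i : ZMod 2).val) ^ 2
      = 1 / 2 ^ (n - 1) := by
  classical
  set ε : (Fin n → ZMod 2) → ℝ :=
    fun x => (-1 : ℝ) ^ (∑ i, x i * y i : ZMod 2).val with hε
  have hn : 1 ≤ n := by
    by_contra h
    push_neg at h
    interval_cases n
    exact hs (Subsingleton.elim _ _)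
  have hεs : ∀ x, ε (x + s) = ε x := by
    intro x
    have h1 : (∑ i, (x i + s i) * y i : ZMod 2) = ∑ i, x i * y i := by
      simp only [add_mul, Finset.sum_add_distrib]
      have h2 : (∑ i, s i * y i : ZMod 2) = 0 := by
        rw [← hy]; exact Finset.sum_congr rfl fun i _ => mul_comm _ _
      rw [h2, add_zero]
    show (-1 : ℝ) ^ (∑ i, (x i + s i) * y i : ZMod 2).val = _
    rw [h1]
  have hεsq : ∀ x, ε x * ε x = 1 := by
    intro x
    simp [hε, ← pow_add, ← two_mul, pow_mul]
  have hfiber : ∀ x : Fin n → ZMod 2,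
      Finset.univ.filter (fun x' => f x' = f x) = {x, x + s} := by
    intro x
    ext x'
    simp only [Finset.mem_filter, Finset.mem_univ, true_and, Finset.mem_insert,
      Finset.mem_singleton]
    rw [show (f x' = f x) ↔ (f x = f x') from eq_comm, hf x x']
  have hxs : ∀ x : Fin n → ZMod 2, x ≠ x + s := by
    intro x h
    apply hs
    have := h.symm
    rwa [add_eq_left] at this
  have key : ∑ z : Fin n → ZMod 2,
      (∑ x ∈ Finset.univ.filter (fun x => f x = z), ε x) ^ 2 = 2 ^ (n + 1) := by
    have step1 : ∀ z : Fin n → ZMod 2,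
        (∑ x ∈ Finset.univ.filter (fun x => f x = z), ε x) ^ 2
        = ∑ x ∈ Finset.univ.filter (fun x => f x = z),
            ε x * ∑ x' ∈ Finset.univ.filter (fun x' => f x' = z), ε x' := by
      intro z
      rw [sq, Finset.sum_mul]
    rw [Finset.sum_congr rfl fun z _ => step1 z]
    have step2 : ∑ z : Fin n → ZMod 2, ∑ x ∈ Finset.univ.filter (fun x => f x = z),
          ε x * ∑ x' ∈ Finset.univ.filter (fun x' => f x' = z), ε x'
        = ∑ x : Fin n → ZMod 2,
            ε x * ∑ x' ∈ Finset.univ.filter (fun x' => f x' = f x), ε x' := by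
      simp only [Finset.sum_filter]
      rw [Finset.sum_comm]
      refine Finset.sum_congr rfl fun x _ => ?_
      have h3 : ∀ z : Fin n → ZMod 2,
          (if f x = z then ε x * ∑ x', if f x' = z then ε x' else 0 else 0)
          = (if f x = z then ε x * ∑ x', if f x' = f x then ε x' else 0 else 0) := by
        intro z
        split
        · next h => rw [← h]
        · rfl
      rw [Finset.sum_congr rfl fun z _ => h3 z, Finset.sum_ite_eq]
      simp
    rw [step2]
    have step3 : ∀ x : Fin n → ZMod 2,
        ε x * ∑ x' ∈ Finset.univ.filter (fun x' => f x' = f x), ε x' = 2 := by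
      intro x
      rw [hfiber x, Finset.sum_pair (hxs x), hεs x]
      rw [mul_add, hεsq x]
      ring
    rw [Finset.sum_congr rfl fun x _ => step3 x]
    simp [Finset.card_univ]
    ring
  simp only [mul_pow, ← Finset.mul_sum]
  rw [key]
  rw [div_pow, one_pow, ← pow_mul]
  rw [div_mul_eq_mul_div, one_mul]
  rw [div_eq_div_iff (by positivity) (by positivity)]
  rw [one_mul, ← pow_add]
  congr 1
  omega
end

section
/- Let H be a universal family of hash functions h : D → F_2^t on a finite set D, and let (w_z)_{z ∈ D} be complex numbers with Σ_{z ∈ D} w_z = 0. Then the average over h ∈ H of Σ_{z' ∈ F_2^t} | Σ_{z : h(z) = z'} w_z |^2 equals (1 − 2^{-t}) · Σ_{z ∈ D} |w_z|^2. -/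
/-!
Expanding the squared norms, the bucket sums of a hash function `h` count the pair `(z₁, z₂)` with
weight `⟪w z₁, w z₂⟫` exactly when `h z₁ = h z₂`. Averaged over a universal family, the diagonal
pairs keep weight `1` and the others get weight `2⁻ᵗ`, so the average is
`(1 - 2⁻ᵗ) ∑ ‖w z‖² + 2⁻ᵗ ‖∑ w z‖²`, and the last term vanishes when the weights sum to zero.
-/

open Finset RealInnerProductSpace

section

variable {ι D Y E : Type*} [SeminormedAddCommGroup E] [InnerProductSpace ℝ E]

theorem norm_sum_sq_eq_sum_sum_inner (s : Finset ι) (v : ι → E) :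
    ‖∑ i ∈ s, v i‖ ^ 2 = ∑ i ∈ s, ∑ j ∈ s, ⟪v i, v j⟫ := by
  rw [← real_inner_self_eq_norm_sq, sum_inner]
  simp only [inner_sum]

variable [Fintype D] [Fintype Y] [DecidableEq Y]

theorem sum_norm_sq_fiber_sum_eq (h : D → Y) (w : D → E) :
    ∑ y, ‖∑ z with h z = y, w z‖ ^ 2 =
      ∑ z₁, ∑ z₂, if h z₁ = h z₂ then ⟪w z₁, w z₂⟫ else 0 := by
  calc ∑ y, ‖∑ z with h z = y, w z‖ ^ 2
      = ∑ y, ∑ z₁ with h z₁ = y, ∑ z₂ with h z₂ = h z₁, ⟪w z₁, w z₂⟫ := by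
        refine sum_congr rfl fun y _ => ?_
        rw [norm_sum_sq_eq_sum_sum_inner]
        refine sum_congr rfl fun z₁ hz₁ => ?_
        rw [(mem_filter.mp hz₁).2]
    _ = ∑ z₁, ∑ z₂, if h z₁ = h z₂ then ⟪w z₁, w z₂⟫ else 0 := by
        rw [sum_fiberwise]
        simp only [sum_filter, eq_comm]

theorem sum_sum_norm_sq_fiber_sum_of_collision (H : Finset (D → Y)) (p : ℝ)
    (hcoll : ∀ z₁ z₂, z₁ ≠ z₂ → (#{h ∈ H | h z₁ = h z₂} : ℝ) = p * #H) (w : D → E) :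
    ∑ h ∈ H, ∑ y, ‖∑ z with h z = y, w z‖ ^ 2 =
      #H * ((1 - p) * ∑ z, ‖w z‖ ^ 2 + p * ‖∑ z, w z‖ ^ 2) := by
  classical
  have hcard (z₁ z₂ : D) : (#{h ∈ H | h z₁ = h z₂} : ℝ) =
      p * #H + if z₁ = z₂ then (1 - p) * #H else 0 := by
    by_cases hz : z₁ = z₂
    · subst hz
      rw [filter_true_of_mem fun _ _ => rfl, if_pos rfl]
      ring
    · rw [if_neg hz, hcoll z₁ z₂ hz, add_zero]
  calc ∑ h ∈ H, ∑ y, ‖∑ z with h z = y, w z‖ ^ 2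
      = ∑ z₁, ∑ z₂, (#{h ∈ H | h z₁ = h z₂} : ℝ) * ⟪w z₁, w z₂⟫ := by
        rw [sum_congr rfl fun h _ => sum_norm_sq_fiber_sum_eq h w, sum_comm]
        refine sum_congr rfl fun z₁ _ => ?_
        rw [sum_comm]
        refine sum_congr rfl fun z₂ _ => ?_
        rw [← sum_filter, sum_const, nsmul_eq_mul]
    _ = _ := by
        simp only [hcard, add_mul, sum_add_distrib, ite_mul, zero_mul, sum_ite_eq,
          mem_univ, if_true, norm_sum_sq_eq_sum_sum_inner, real_inner_self_eq_norm_sq,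
          ← mul_sum, mul_assoc]
        ring

end

theorem universal_hash_cancellation_complex_general (D : Type*) [Fintype D] (t : ℕ)
    (H : Finset (D → (Fin t → ZMod 2))) (hH : H.Nonempty)
    (huniv : ∀ z₁ z₂ : D, z₁ ≠ z₂ →
      (H.filter (fun h => h z₁ = h z₂)).card * 2 ^ t = H.card)
    (w : D → ℂ) (hw : ∑ z, w z = 0) :
    ((1 : ℝ) / H.card) *
        ∑ h ∈ H, ∑ z' : Fin t → ZMod 2,
          ‖∑ z ∈ Finset.univ.filter (fun z => h z = z'), w z‖ ^ 2
      = (1 - 1 / 2 ^ t) * ∑ z, ‖w z‖ ^ 2 := by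
  have hcoll (z₁ z₂ : D) (hz : z₁ ≠ z₂) :
      (#{h ∈ H | h z₁ = h z₂} : ℝ) = 1 / 2 ^ t * #H := by
    rw [← huniv z₁ z₂ hz]
    push_cast
    field_simp
  have hcard : (#H : ℝ) ≠ 0 := by exact_mod_cast hH.card_ne_zero
  rw [sum_sum_norm_sq_fiber_sum_of_collision H _ hcoll, hw, norm_zero]
  field_simp
  ring

theorem universal_hash_cancellation_complex (D : Type*) [Fintype D] [DecidableEq D] (t : ℕ)
    (H : Finset (D → (Fin t → ZMod 2))) (hH : H.Nonempty)
    (huniv : ∀ z₁ z₂ : D, z₁ ≠ z₂ →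
      (H.filter (fun h => h z₁ = h z₂)).card * 2 ^ t = H.card)
    (w : D → ℂ) (hw : ∑ z, w z = 0) :
    ((1 : ℝ) / H.card) *
        ∑ h ∈ H, ∑ z' : Fin t → ZMod 2,
          ‖∑ z ∈ Finset.univ.filter (fun z => h z = z'), w z‖ ^ 2
      = (1 - 1 / 2 ^ t) * ∑ z, ‖w z‖ ^ 2 :=
  universal_hash_cancellation_complex_general D t H hH huniv w hw
end

section
/- Fix t ≥ 1 and n ≥ 2. Consider a sequence of independent random draws where, for a current subspace span(Y) of dimension i−1 with 0 ≤ i−1 ≤ n−2, a new vector orthogonal to a fixed s ≠ 0 and outside span(Y) is obtained with probability p_i = (1 − 2^{-t}) · (2^{n-1} − 2^{i-1})/2^{n-1}. Then the expected total number of draws until n−1 linearly independent vectors are collected is Σ_{i=1}^{n-1} 1/p_i ≤ (n+1)/(1 − 2^{-t}). -/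
theorem hashed_simon_expected_measurements (t n : ℕ) (ht : 1 ≤ t) (hn : 2 ≤ n) :
    ∑ i ∈ Finset.Ico 1 n,
        1 / ((1 - (1 : ℝ) / 2 ^ t) * (((2 : ℝ) ^ (n - 1) - 2 ^ (i - 1)) / 2 ^ (n - 1)))
      ≤ ((n : ℝ) + 1) / (1 - 1 / 2 ^ t) := by
  obtain ⟨m, rfl⟩ : ∃ m, n = m + 2 := ⟨n - 2, by omega⟩
  have h2t : (2:ℝ) ≤ 2 ^ t := by
    calc (2:ℝ) = 2 ^ 1 := (pow_one 2).symm
    _ ≤ 2 ^ t := pow_le_pow_right₀ one_le_two ht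
  have hc : (0:ℝ) < 1 - 1 / 2 ^ t := by
    have h0 : (0:ℝ) < 2 ^ t := by positivity
    have : (1:ℝ) / 2 ^ t ≤ 1 / 2 := by
      apply div_le_div_of_nonneg_left (by norm_num) (by norm_num) h2t
    linarith
  have hstep : ∀ i ∈ Finset.Ico 1 (m + 2),
      1 / ((1 - (1 : ℝ) / 2 ^ t) * (((2 : ℝ) ^ (m + 2 - 1) - 2 ^ (i - 1)) / 2 ^ (m + 2 - 1)))
      = (1 / (((2 : ℝ) ^ (m + 2 - 1) - 2 ^ (i - 1)) / 2 ^ (m + 2 - 1))) / (1 - 1 / 2 ^ t) := by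
    intro i hi
    rw [mul_comm, div_div]
  rw [Finset.sum_congr rfl hstep, ← Finset.sum_div]
  gcongr
  -- main inequality
  have hm1 : m + 2 - 1 = m + 1 := rfl
  rw [hm1, Finset.sum_Ico_eq_sum_range]
  have hterm : ∀ j ∈ Finset.range (m + 2 - 1),
      1 / (((2 : ℝ) ^ (m + 1) - 2 ^ (1 + j - 1)) / 2 ^ (m + 1)) ≤ 1 + 2 ^ j / 2 ^ m := by
    intro j hj
    simp only [Finset.mem_range] at hj
    have hjm : j ≤ m := by omega
    have hjj : 1 + j - 1 = j := by omega
    rw [hjj]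
    have h1 : (2:ℝ) ^ j ≤ 2 ^ m := pow_le_pow_right₀ one_le_two hjm
    have h2 : (0:ℝ) < 2 ^ m := by positivity
    have hD : (0:ℝ) < 2 ^ (m + 1) - 2 ^ j := by
      have : (2:ℝ) ^ m < 2 ^ (m + 1) := by
        rw [pow_succ]; nlinarith
      linarith
    rw [one_div_div, div_le_iff₀ hD]
    have hDm : (2:ℝ) ^ m ≤ 2 ^ (m + 1) - 2 ^ j := by
      rw [pow_succ]; nlinarith
    have h3 : (2:ℝ) ^ j / 2 ^ m * (2 ^ (m + 1) - 2 ^ j) ≥ 0 := by positivity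
    have h4 : (2:ℝ) ^ j / 2 ^ m ≤ 1 := by rw [div_le_one h2]; exact h1
    -- 2^(m+1) = (2^(m+1)-2^j) + 2^j ≤ (1 + 2^j/2^m)(2^(m+1)-2^j)
    have h5 : (2:ℝ) ^ j = 2 ^ j / 2 ^ m * 2 ^ m := by field_simp
    nlinarith [mul_le_mul_of_nonneg_left hDm (show (0:ℝ) ≤ 2 ^ j / 2 ^ m by positivity)]
  calc ∑ j ∈ Finset.range (m + 2 - 1),
        1 / (((2 : ℝ) ^ (m + 1) - 2 ^ (1 + j - 1)) / 2 ^ (m + 1))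
      ≤ ∑ j ∈ Finset.range (m + 2 - 1), (1 + 2 ^ j / 2 ^ m) := Finset.sum_le_sum hterm
    _ = (m + 1 : ℝ) + (∑ j ∈ Finset.range (m + 1), (2:ℝ) ^ j) / 2 ^ m := by
        rw [Finset.sum_add_distrib, Finset.sum_const, ← Finset.sum_div]
        simp
    _ ≤ (m + 1 : ℝ) + 2 := by
        have hg : ∑ j ∈ Finset.range (m + 1), (2:ℝ) ^ j = 2 ^ (m + 1) - 1 := by
          rw [geom_sum_eq (by norm_num)]; norm_num
        have h2 : (0:ℝ) < 2 ^ m := by positivity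
        rw [hg]
        have : ((2:ℝ) ^ (m + 1) - 1) / 2 ^ m ≤ 2 := by
          rw [div_le_iff₀ h2, pow_succ]; nlinarith
        linarith
    _ ≤ (↑(m + 2) : ℝ) + 1 := by push_cast; linarith
end
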